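/- Fix positive constants κ̄, Rg, T∞, ρl, R*, σ, ρ*, p∞, a real constant μl ≥ 0, and γ > 1, satisfying the equilibrium relation Rg·T∞·ρ* = p∞ + 2σ/R*. Then there exists β > 0 such that every τ ∈ ℂ with τ ≠ −π²κ̄j² for all integers j ≥ 1 and Q(τ) = 0 satisfies Re(τ) ≤ −β. -/

import Mathlib

open Real Complex

/-- The meromorphic function `Q` from the linearized bubble dynamics. -/
noncomputable def Q (κ Rg T ρl Rs σ ρs μl γ : ℝ) (τ : ℂ) : ℂ :=
  ((1 / (Rg * T) : ℝ) : ℂ) *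
      (((4 * Real.pi / (3 * γ) : ℝ) : ℂ) +
        ((8 * (γ - 1) / (Real.pi * γ) : ℝ) : ℂ) *
          ∑' j : ℕ+, ((Real.pi ^ 2 * κ : ℝ) : ℂ) /
            (((Real.pi ^ 2 * κ * ((j : ℕ) : ℝ) ^ 2 : ℝ) : ℂ) + τ)) *
      (((ρl * Rs : ℝ) : ℂ) * τ ^ 2 + ((4 * μl / Rs : ℝ) : ℂ) * τ - ((2 * σ / Rs ^ 2 : ℝ) : ℂ)) +
    ((4 * Real.pi * ρs / Rs : ℝ) : ℂ)

namespace BubbleAux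

/-- The `j`-th term of the series in `Q`. -/
noncomputable def fterm (k : ℝ) (τ : ℂ) (j : ℕ+) : ℂ :=
  ((k : ℝ) : ℂ) / (((k * ((j : ℕ) : ℝ) ^ 2 : ℝ) : ℂ) + τ)

/-- The denominator. -/
noncomputable def dterm (k : ℝ) (τ : ℂ) (j : ℕ+) : ℂ :=
  ((k * ((j : ℕ) : ℝ) ^ 2 : ℝ) : ℂ) + τ

lemma fterm_eq (k : ℝ) (τ : ℂ) (j : ℕ+) : fterm k τ j = ((k : ℝ) : ℂ) / dterm k τ j := rfl

lemma one_le_j (j : ℕ+) : (1 : ℝ) ≤ ((j : ℕ) : ℝ) := by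
  exact_mod_cast j.one_le

lemma one_le_jsq (j : ℕ+) : (1 : ℝ) ≤ ((j : ℕ) : ℝ) ^ 2 := by
  nlinarith [one_le_j j]

lemma dterm_re (k : ℝ) (τ : ℂ) (j : ℕ+) :
    (dterm k τ j).re = k * ((j : ℕ) : ℝ) ^ 2 + τ.re := by
  rw [dterm, Complex.add_re, Complex.ofReal_re]

lemma dterm_im (k : ℝ) (τ : ℂ) (j : ℕ+) : (dterm k τ j).im = τ.im := by
  rw [dterm, Complex.add_im, Complex.ofReal_im, zero_add]

lemma dterm_re_ge {k : ℝ} (hk : 0 < k) {τ : ℂ} (hτ : -(k / 2) ≤ τ.re) (j : ℕ+) :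
    k * ((j : ℕ) : ℝ) ^ 2 / 2 ≤ (dterm k τ j).re := by
  rw [dterm_re]
  nlinarith [one_le_jsq j]

lemma dterm_re_pos {k : ℝ} (hk : 0 < k) {τ : ℂ} (hτ : -(k / 2) ≤ τ.re) (j : ℕ+) :
    0 < (dterm k τ j).re :=
  lt_of_lt_of_le (by positivity) (dterm_re_ge hk hτ j)

lemma dterm_norm_ge {k : ℝ} (hk : 0 < k) {τ : ℂ} (hτ : -(k / 2) ≤ τ.re) (j : ℕ+) :
    k * ((j : ℕ) : ℝ) ^ 2 / 2 ≤ ‖dterm k τ j‖ := by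
  refine (dterm_re_ge hk hτ j).trans ?_
  exact (Complex.abs_re_le_norm _).trans' (le_abs_self _)

lemma dterm_normSq_ge {k : ℝ} (hk : 0 < k) {τ : ℂ} (hτ : -(k / 2) ≤ τ.re) (j : ℕ+) :
    (k * ((j : ℕ) : ℝ) ^ 2 / 2) ^ 2 ≤ Complex.normSq (dterm k τ j) := by
  rw [Complex.normSq_eq_norm_sq]
  have h := dterm_norm_ge hk hτ j
  have h0 : (0:ℝ) ≤ k * ((j : ℕ) : ℝ) ^ 2 / 2 := by positivity
  nlinarith

lemma fterm_norm_le {k : ℝ} (hk : 0 < k) {τ : ℂ} (hτ : -(k / 2) ≤ τ.re) (j : ℕ+) :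
    ‖fterm k τ j‖ ≤ 2 / ((j : ℕ) : ℝ) ^ 2 := by
  rw [fterm_eq, norm_div]
  have h := dterm_norm_ge hk hτ j
  have hd : (0:ℝ) < k * ((j : ℕ) : ℝ) ^ 2 / 2 := by positivity
  have hjsq : (0:ℝ) < ((j : ℕ) : ℝ) ^ 2 := by positivity
  have hnorm : ‖((k : ℝ) : ℂ)‖ = k := by
    rw [Complex.norm_real, Real.norm_eq_abs, abs_of_pos hk]
  rw [hnorm]
  rw [div_le_div_iff₀ (lt_of_lt_of_le hd h) hjsq]
  nlinarith

lemma summable_two_div_sq : Summable (fun j : ℕ+ => 2 / ((j : ℕ) : ℝ) ^ 2) := by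
  have h : Summable (fun n : ℕ => 1 / (n : ℝ) ^ 2) :=
    summable_one_div_nat_pow.mpr one_lt_two
  have := (h.mul_left 2).comp_injective (fun a b h => PNat.coe_injective h : Function.Injective (fun j : ℕ+ => (j : ℕ)))
  simpa [Function.comp_def, mul_one_div, div_eq_mul_inv] using this

lemma summable_fterm {k : ℝ} (hk : 0 < k) {τ : ℂ} (hτ : -(k / 2) ≤ τ.re) :
    Summable (fterm k τ) :=
  Summable.of_norm_bounded summable_two_div_sq (fterm_norm_le hk hτ)

lemma fterm_re_eq (k : ℝ) (τ : ℂ) (j : ℕ+) :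
    (fterm k τ j).re = k * (dterm k τ j).re / Complex.normSq (dterm k τ j) := by
  rw [fterm_eq, Complex.div_re]
  simp

lemma fterm_im_eq (k : ℝ) (τ : ℂ) (j : ℕ+) :
    (fterm k τ j).im = -(k * τ.im / Complex.normSq (dterm k τ j)) := by
  rw [fterm_eq, Complex.div_im, dterm_im]
  simp [neg_div]

lemma fterm_re_nonneg {k : ℝ} (hk : 0 < k) {τ : ℂ} (hτ : -(k / 2) ≤ τ.re) (j : ℕ+) :
    0 ≤ (fterm k τ j).re := by
  rw [fterm_re_eq]
  have h1 := (dterm_re_pos hk hτ j).le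
  have h2 := Complex.normSq_nonneg (dterm k τ j)
  positivity


lemma summable_one_div_sq_pnat : Summable (fun j : ℕ+ => 1 / ((j : ℕ) : ℝ) ^ 2) := by
  have h := summable_two_div_sq
  have : (fun j : ℕ+ => 1 / ((j : ℕ) : ℝ) ^ 2) = fun j : ℕ+ => (1/2) * (2 / ((j : ℕ) : ℝ) ^ 2) := by
    funext j; ring
  rw [this]
  exact h.mul_left _

lemma tsum_one_div_sq_pnat_le : (∑' j : ℕ+, 1 / ((j : ℕ) : ℝ) ^ 2) ≤ 2 := by
  have hinj : Function.Injective (fun j : ℕ+ => (j : ℕ)) := fun a b h => PNat.coe_injective h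
  have hle : (∑' j : ℕ+, 1 / ((j : ℕ) : ℝ) ^ 2) ≤ ∑' n : ℕ, 1 / (n : ℝ) ^ 2 :=
    Summable.tsum_le_tsum_of_inj (fun j : ℕ+ => (j : ℕ)) hinj (fun n _ => by positivity)
      (fun j => le_rfl) summable_one_div_sq_pnat (summable_one_div_nat_pow.mpr one_lt_two)
  rw [hasSum_zeta_two.tsum_eq] at hle
  have hπ : π < 3.15 := Real.pi_lt_d2
  have hπ0 : 0 < π := Real.pi_pos
  nlinarith

lemma summable_fterm_re {k : ℝ} (hk : 0 < k) {τ : ℂ} (hτ : -(k / 2) ≤ τ.re) :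
    Summable (fun j : ℕ+ => (fterm k τ j).re) :=
  (Complex.hasSum_re (summable_fterm hk hτ).hasSum).summable

lemma re_tsum_nonneg {k : ℝ} (hk : 0 < k) {τ : ℂ} (hτ : -(k / 2) ≤ τ.re) :
    0 ≤ (∑' j : ℕ+, fterm k τ j).re := by
  rw [Complex.re_tsum (summable_fterm hk hτ)]
  exact tsum_nonneg (fterm_re_nonneg hk hτ)

lemma fterm_norm_le' {k : ℝ} (hk : 0 < k) {τ : ℂ} (hτ : 0 ≤ τ.re) (j : ℕ+) :
    ‖fterm k τ j‖ ≤ 1 / ((j : ℕ) : ℝ) ^ 2 := by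
  rw [fterm_eq, norm_div]
  have hd : k * ((j : ℕ) : ℝ) ^ 2 ≤ (dterm k τ j).re := by
    rw [dterm_re]; linarith
  have hd' : k * ((j : ℕ) : ℝ) ^ 2 ≤ ‖dterm k τ j‖ :=
    hd.trans ((Complex.abs_re_le_norm _).trans' (le_abs_self _))
  have hdpos : (0:ℝ) < k * ((j : ℕ) : ℝ) ^ 2 := by
    have := one_le_jsq j; nlinarith
  have hnorm : ‖((k : ℝ) : ℂ)‖ = k := by
    rw [Complex.norm_real, Real.norm_eq_abs, abs_of_pos hk]
  rw [hnorm, div_le_div_iff₀ (lt_of_lt_of_le hdpos hd') (by positivity)]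
  nlinarith

lemma re_tsum_le_two {k : ℝ} (hk : 0 < k) {τ : ℂ} (hτ : 0 ≤ τ.re) :
    (∑' j : ℕ+, fterm k τ j).re ≤ 2 := by
  have hτ' : -(k / 2) ≤ τ.re := le_trans (by nlinarith) hτ
  have h1 : (∑' j : ℕ+, fterm k τ j).re ≤ ‖∑' j : ℕ+, fterm k τ j‖ :=
    (Complex.abs_re_le_norm _).trans' (le_abs_self _)
  refine h1.trans ?_
  have hsn : Summable (fun j : ℕ+ => ‖fterm k τ j‖) :=
    Summable.of_nonneg_of_le (fun j => norm_nonneg _) (fterm_norm_le hk hτ')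
      summable_two_div_sq
  refine (norm_tsum_le_tsum_norm hsn).trans ?_
  refine le_trans (Summable.tsum_le_tsum (fterm_norm_le' hk hτ) hsn summable_one_div_sq_pnat) ?_
  exact tsum_one_div_sq_pnat_le

/-- The (real, positive) sum `∑ k / |d_j|²` controlling the imaginary part. -/
noncomputable def Wsum (k : ℝ) (τ : ℂ) : ℝ := ∑' j : ℕ+, k / Complex.normSq (dterm k τ j)

lemma summable_Wterm {k : ℝ} (hk : 0 < k) {τ : ℂ} (hτ : -(k / 2) ≤ τ.re) :
    Summable (fun j : ℕ+ => k / Complex.normSq (dterm k τ j)) := by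
  refine Summable.of_nonneg_of_le (fun j => ?_) (fun j => ?_)
    (summable_two_div_sq.mul_left (2 / k))
  · have := Complex.normSq_nonneg (dterm k τ j); positivity
  · have h1 := dterm_normSq_ge hk hτ j
    have hj := one_le_jsq j
    have hpos : (0:ℝ) < (k * ((j : ℕ) : ℝ) ^ 2 / 2) ^ 2 := by positivity
    have h2 : k / Complex.normSq (dterm k τ j) ≤ k / (k * ((j : ℕ) : ℝ) ^ 2 / 2) ^ 2 :=
      div_le_div_of_nonneg_left hk.le hpos h1
    refine h2.trans ?_
    have hjp : (0:ℝ) < ((j : ℕ) : ℝ) ^ 2 := by positivity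
    have heq1 : k / (k * ((j : ℕ) : ℝ) ^ 2 / 2) ^ 2
        = 4 / (k * (((j : ℕ) : ℝ) ^ 2) ^ 2) := by
      field_simp; ring
    have heq2 : 2 / k * (2 / ((j : ℕ) : ℝ) ^ 2) = 4 / (k * ((j : ℕ) : ℝ) ^ 2) := by
      field_simp; ring
    rw [heq1, heq2]
    apply div_le_div_of_nonneg_left (by norm_num) (by positivity)
    nlinarith [mul_nonneg (mul_pos hk hjp).le (sub_nonneg.mpr hj)]

lemma dterm_ne_zero {k : ℝ} (hk : 0 < k) {τ : ℂ} (hτ : -(k / 2) ≤ τ.re) (j : ℕ+) :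
    dterm k τ j ≠ 0 := by
  intro h0
  have h := dterm_re_pos hk hτ j
  rw [h0] at h
  simp at h

lemma dterm_normSq_pos {k : ℝ} (hk : 0 < k) {τ : ℂ} (hτ : -(k / 2) ≤ τ.re) (j : ℕ+) :
    0 < Complex.normSq (dterm k τ j) :=
  Complex.normSq_pos.mpr (dterm_ne_zero hk hτ j)

lemma Wsum_pos {k : ℝ} (hk : 0 < k) {τ : ℂ} (hτ : -(k / 2) ≤ τ.re) : 0 < Wsum k τ := by
  refine Summable.tsum_pos (summable_Wterm hk hτ) (fun j => ?_) 1 ?_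
  · have := (dterm_normSq_pos hk hτ j).le; positivity
  · have := dterm_normSq_pos hk hτ 1; positivity

lemma im_tsum_eq {k : ℝ} (hk : 0 < k) {τ : ℂ} (hτ : -(k / 2) ≤ τ.re) :
    (∑' j : ℕ+, fterm k τ j).im = -(τ.im * Wsum k τ) := by
  rw [Complex.im_tsum (summable_fterm hk hτ)]
  have : (fun j : ℕ+ => (fterm k τ j).im)
      = fun j : ℕ+ => -(τ.im * (k / Complex.normSq (dterm k τ j))) := by
    funext j; rw [fterm_im_eq]; ring
  rw [this, tsum_neg, Wsum, ← tsum_mul_left]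


/-- The series sum appearing in `Q`. -/
noncomputable def Sfun (k : ℝ) (τ : ℂ) : ℂ := ∑' j : ℕ+, fterm k τ j

lemma Sfun_re_nonneg {k : ℝ} (hk : 0 < k) {τ : ℂ} (hτ : -(k / 2) ≤ τ.re) :
    0 ≤ (Sfun k τ).re := re_tsum_nonneg hk hτ

lemma Sfun_re_le_two {k : ℝ} (hk : 0 < k) {τ : ℂ} (hτ : 0 ≤ τ.re) :
    (Sfun k τ).re ≤ 2 := re_tsum_le_two hk hτ

lemma Sfun_im_eq {k : ℝ} (hk : 0 < k) {τ : ℂ} (hτ : -(k / 2) ≤ τ.re) :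
    (Sfun k τ).im = -(τ.im * Wsum k τ) := im_tsum_eq hk hτ

end BubbleAux

set_option maxHeartbeats 1000000 in
open BubbleAux in
lemma Q_eq (κ Rg T ρl Rs σ ρs μl γ : ℝ) (τ : ℂ) :
    Q κ Rg T ρl Rs σ ρs μl γ τ =
      ((1 / (Rg * T) : ℝ) : ℂ) *
        (((4 * Real.pi / (3 * γ) : ℝ) : ℂ) +
          ((8 * (γ - 1) / (Real.pi * γ) : ℝ) : ℂ) * Sfun (Real.pi ^ 2 * κ) τ) *
        (((ρl * Rs : ℝ) : ℂ) * τ ^ 2 + ((4 * μl / Rs : ℝ) : ℂ) * τ - ((2 * σ / Rs ^ 2 : ℝ) : ℂ)) +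
      ((4 * Real.pi * ρs / Rs : ℝ) : ℂ) := by
  rw [Q, Sfun]
  rfl

set_option maxHeartbeats 1000000 in
open BubbleAux in
lemma no_zero_in_rhp (κ Rg T ρl Rs σ ρs pinf μl γ : ℝ)
    (hκ : 0 < κ) (hRg : 0 < Rg) (hT : 0 < T) (hρl : 0 < ρl) (hRs : 0 < Rs)
    (hσ : 0 < σ) (hρs : 0 < ρs) (hp : 0 < pinf) (hμl : 0 ≤ μl) (hγ : 1 < γ)
    (heq : Rg * T * ρs = pinf + 2 * σ / Rs)
    (τ : ℂ) (hτ : 0 ≤ τ.re) : Q κ Rg T ρl Rs σ ρs μl γ τ ≠ 0 := by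
  intro hQ
  have hπ : (3:ℝ) < Real.pi := Real.pi_gt_three
  set k : ℝ := Real.pi ^ 2 * κ with hkdef
  have hk : 0 < k := by rw [hkdef]; positivity
  have hτ' : -(k / 2) ≤ τ.re := le_trans (by linarith only [hk]) hτ
  -- names for the real constants
  set r : ℝ := 1 / (Rg * T) with hrdef
  set a : ℝ := 4 * Real.pi / (3 * γ) with hadef
  set b : ℝ := 8 * (γ - 1) / (Real.pi * γ) with hbdef
  set c : ℝ := 4 * Real.pi * ρs / Rs with hcdef
  have hr : 0 < r := by positivity
  have ha : 0 < a := by rw [hadef]; positivity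
  have hb : 0 < b := by
    rw [hbdef]
    have hh : 0 < γ - 1 := by linarith
    positivity
  have hc : 0 < c := by rw [hcdef]; positivity
  set S : ℂ := Sfun k τ with hSdef
  set A : ℂ := ((r : ℝ) : ℂ) * (((a : ℝ) : ℂ) + ((b : ℝ) : ℂ) * S) with hAdef
  set P : ℂ := ((ρl * Rs : ℝ) : ℂ) * τ ^ 2 + ((4 * μl / Rs : ℝ) : ℂ) * τ
      - ((2 * σ / Rs ^ 2 : ℝ) : ℂ) with hPdef
  have hAP : A * P = -((c : ℝ) : ℂ) := by
    have := (Q_eq κ Rg T ρl Rs σ ρs μl γ τ).symm.trans hQ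
    rw [← hAdef, ← hPdef] at this
    linear_combination this
  -- real components
  have e1 : A.re * P.re - A.im * P.im = -c := by
    have := congrArg Complex.re hAP
    simpa [Complex.mul_re] using this
  have e2 : A.re * P.im + A.im * P.re = 0 := by
    have := congrArg Complex.im hAP
    simpa [Complex.mul_im] using this
  have hAre : A.re = r * (a + b * S.re) := by
    rw [hAdef]
    simp [Complex.mul_re, Complex.mul_im]
  have hAim : A.im = r * (b * S.im) := by
    rw [hAdef]
    simp [Complex.mul_re, Complex.mul_im]
  have hPre : P.re = ρl * Rs * (τ.re ^ 2 - τ.im ^ 2) + (4 * μl / Rs) * τ.re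
      - 2 * σ / Rs ^ 2 := by
    rw [hPdef, pow_two]
    simp only [Complex.add_re, Complex.sub_re, Complex.mul_re, Complex.mul_im,
      Complex.ofReal_re, Complex.ofReal_im]
    ring
  have hPim : P.im = τ.im * (2 * (ρl * Rs) * τ.re + 4 * μl / Rs) := by
    rw [hPdef, pow_two]
    simp only [Complex.add_im, Complex.sub_im, Complex.mul_re, Complex.mul_im,
      Complex.ofReal_re, Complex.ofReal_im]
    ring
  -- facts about S
  have hE0 : 0 ≤ S.re := Sfun_re_nonneg hk hτ'
  have hE2 : S.re ≤ 2 := Sfun_re_le_two hk hτ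
  have hSim : S.im = -(τ.im * Wsum k τ) := Sfun_im_eq hk hτ'
  have hW : 0 < Wsum k τ := Wsum_pos hk hτ'
  clear_value S A P
  set W' : ℝ := r * b * Wsum k τ with hW'def
  have hW'pos : 0 < W' := by rw [hW'def]; positivity
  have hupos : 0 < A.re := by
    rw [hAre]
    have h0 : 0 ≤ b * S.re := mul_nonneg hb.le hE0
    have h1 : 0 < a + b * S.re := by linarith only [ha, h0]
    exact mul_pos hr h1
  have hvform : A.im = -(τ.im * W') := by
    rw [hAim, hSim, hW'def]; ring
  clear_value W'
  set G : ℝ := 2 * (ρl * Rs) * τ.re + 4 * μl / Rs with hGdef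
  have hG : 0 ≤ G := by
    rw [hGdef]
    have h1 : 0 ≤ 2 * (ρl * Rs) * τ.re := by positivity
    have h2 : 0 ≤ 4 * μl / Rs := by positivity
    linarith
  clear_value G
  by_cases hy : τ.im = 0
  · -- real case
    have hv0 : A.im = 0 := by rw [hvform, hy]; ring
    have hq0 : P.im = 0 := by rw [hPim, hy]; ring
    have e1' : A.re * P.re = -c := by rw [hv0, hq0] at e1; linarith
    have hpneg : P.re < 0 := by
      by_contra hpn
      push_neg at hpn
      linarith only [mul_nonneg hupos.le hpn, e1', hc]
    have hPrelb : -(2 * σ / Rs ^ 2) ≤ P.re := by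
      rw [hPre, hy]
      have h1 : 0 ≤ ρl * Rs * τ.re ^ 2 := by positivity
      have h2 : 0 ≤ (4 * μl / Rs) * τ.re := by positivity
      nlinarith only [h1, h2]
    have hAub : A.re ≤ r * (a + 2 * b) := by
      rw [hAre]
      have h := mul_le_mul_of_nonneg_left
        (mul_le_mul_of_nonneg_left hE2 hb.le) hr.le
      linarith only [h]
    -- `A.re * P.re ≥ (r*(a+2b)) * P.re ≥ (r*(a+2b)) * (-(2σ/Rs²))`
    have key : -c ≥ r * (a + 2 * b) * (-(2 * σ / Rs ^ 2)) := by
      have h1 : A.re * P.re ≥ r * (a + 2 * b) * P.re := by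
        nlinarith only [hAub, hpneg]
      have h2 : r * (a + 2 * b) * P.re ≥ r * (a + 2 * b) * (-(2 * σ / Rs ^ 2)) := by
        have hpos : 0 < r * (a + 2 * b) := by positivity
        nlinarith only [hpos, hPrelb]
      linarith only [e1', h1, h2]
    -- numeric contradiction using the equilibrium relation
    have hab : a + 2 * b ≤ 4 * Real.pi := by
      rw [hadef, hbdef]
      have h1 : 4 * Real.pi / (3 * γ) ≤ 4 * Real.pi / 3 := by
        apply div_le_div_of_nonneg_left (by positivity) (by norm_num) (by linarith)
      have h2 : 8 * (γ - 1) / (Real.pi * γ) ≤ 8 / Real.pi := by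
        rw [div_le_div_iff₀ (by positivity) (by positivity)]
        nlinarith only [hπ, hγ]
      have h3 : 8 / Real.pi ≤ 8 / 3 := by
        apply div_le_div_of_nonneg_left (by norm_num) (by norm_num) hπ.le
      linarith only [h1, h2, h3, hπ]
    have hρs' : ρs = (pinf + 2 * σ / Rs) / (Rg * T) := by
      rw [eq_div_iff (by positivity : (Rg * T : ℝ) ≠ 0)]
      linarith only [heq]
    have hcgt : r * (a + 2 * b) * (2 * σ / Rs ^ 2) < c := by
      rw [hrdef, hcdef, hρs']
      have hRgT : 0 < Rg * T := by positivity
      rw [div_mul_eq_mul_div, div_mul_eq_mul_div, one_mul]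
      rw [div_lt_div_iff₀ hRgT (by positivity : (0:ℝ) < Rs)]
      have hmain : (a + 2 * b) * (2 * σ / Rs ^ 2) * Rs
          < 4 * Real.pi * (pinf + 2 * σ / Rs) := by
        have h4 : (a + 2 * b) * (2 * σ / Rs ^ 2) * Rs ≤ 4 * Real.pi * (2 * σ / Rs) := by
          have h5 : (2 * σ / Rs ^ 2) * Rs = 2 * σ / Rs := by field_simp
          calc (a + 2 * b) * (2 * σ / Rs ^ 2) * Rs
              = (a + 2 * b) * (2 * σ / Rs) := by rw [mul_assoc, h5]
            _ ≤ 4 * Real.pi * (2 * σ / Rs) := by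
                apply mul_le_mul_of_nonneg_right hab (by positivity)
        linarith only [h4, mul_pos (by positivity : (0:ℝ) < 4 * Real.pi) hp]
      calc (a + 2 * b) * (2 * σ / Rs ^ 2) * Rs
          < 4 * Real.pi * (pinf + 2 * σ / Rs) := hmain
        _ = 4 * Real.pi * ((pinf + 2 * σ / Rs) / (Rg * T)) * (Rg * T) := by field_simp
    linarith only [key, hcgt]
  · -- nonreal case
    have hq : P.im = τ.im * G := by rw [hPim, hGdef]
    have e2' : τ.im * (A.re * G - W' * P.re) = 0 := by
      rw [hq, hvform] at e2
      linear_combination e2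
    have hkey : A.re * G = W' * P.re := by
      rcases mul_eq_zero.mp e2' with h | h
      · exact absurd h hy
      · linarith only [h]
    have hpn : 0 ≤ P.re := by
      have h1 : 0 ≤ A.re * G := mul_nonneg hupos.le hG
      rw [hkey] at h1
      nlinarith only [h1, hW'pos]
    have e1' : A.re * P.re + W' * G * τ.im ^ 2 = -c := by
      rw [hvform, hq] at e1
      linear_combination e1
    linarith only [e1', hc, mul_nonneg hupos.le hpn,
      mul_nonneg (mul_nonneg hW'pos.le hG) (sq_nonneg τ.im)]

open BubbleAux in
lemma zero_bound (κ Rg T ρl Rs σ ρs μl γ : ℝ)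
    (hκ : 0 < κ) (hRg : 0 < Rg) (hT : 0 < T) (hρl : 0 < ρl) (hRs : 0 < Rs)
    (hσ : 0 < σ) (hρs : 0 < ρs) (hμl : 0 ≤ μl) (hγ : 1 < γ) :
    ∃ M : ℝ, 0 < M ∧ ∀ τ : ℂ, -(Real.pi ^ 2 * κ / 2) ≤ τ.re →
      Q κ Rg T ρl Rs σ ρs μl γ τ = 0 → ‖τ‖ ≤ M := by
  have hπ : (3:ℝ) < Real.pi := Real.pi_gt_three
  set k : ℝ := Real.pi ^ 2 * κ with hkdef
  have hk : 0 < k := by rw [hkdef]; positivity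
  set r : ℝ := 1 / (Rg * T) with hrdef
  set a : ℝ := 4 * Real.pi / (3 * γ) with hadef
  set b : ℝ := 8 * (γ - 1) / (Real.pi * γ) with hbdef
  set c : ℝ := 4 * Real.pi * ρs / Rs with hcdef
  have hr : 0 < r := by positivity
  have ha : 0 < a := by rw [hadef]; positivity
  have hb : 0 < b := by
    rw [hbdef]
    have hh : 0 < γ - 1 := by linarith
    positivity
  have hc : 0 < c := by rw [hcdef]; positivity
  set C1 : ℝ := c / (r * a) with hC1def
  have hC1 : 0 < C1 := by rw [hC1def]; positivity
  set s2 : ℝ := 2 * σ / Rs ^ 2 with hs2def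
  have hs2 : 0 < s2 := by rw [hs2def]; positivity
  set m4 : ℝ := 4 * μl / Rs with hm4def
  have hm4 : 0 ≤ m4 := by rw [hm4def]; positivity
  set ρR : ℝ := ρl * Rs with hρRdef
  have hρR : 0 < ρR := by rw [hρRdef]; positivity
  set D : ℝ := C1 + s2 + m4 with hDdef
  have hD : 0 < D := by rw [hDdef]; linarith only [hC1, hs2, hm4]
  refine ⟨1 + D / ρR, by positivity, ?_⟩
  set M : ℝ := 1 + D / ρR with hMdef
  intro τ hτ' hQ
  set S : ℂ := Sfun k τ with hSdef
  set A : ℂ := ((r : ℝ) : ℂ) * (((a : ℝ) : ℂ) + ((b : ℝ) : ℂ) * S) with hAdef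
  set P : ℂ := ((ρl * Rs : ℝ) : ℂ) * τ ^ 2 + ((4 * μl / Rs : ℝ) : ℂ) * τ
      - ((2 * σ / Rs ^ 2 : ℝ) : ℂ) with hPdef
  have hAP : A * P = -((c : ℝ) : ℂ) := by
    have := (Q_eq κ Rg T ρl Rs σ ρs μl γ τ).symm.trans hQ
    rw [← hAdef, ← hPdef] at this
    linear_combination this
  have hAre : A.re = r * (a + b * S.re) := by
    rw [hAdef]
    simp [Complex.mul_re, Complex.mul_im]
  have hE0 : 0 ≤ S.re := Sfun_re_nonneg hk hτ'
  clear_value S A P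
  -- lower bound for `‖A‖`
  have hmA : r * a ≤ ‖A‖ := by
    have h1 : r * a ≤ A.re := by
      rw [hAre]
      have h0 := mul_nonneg hr.le (mul_nonneg hb.le hE0)
      linarith only [h0]
    refine h1.trans ?_
    exact (Complex.abs_re_le_norm _).trans' (le_abs_self _)
  have hnormAP : ‖A‖ * ‖P‖ = c := by
    have := congrArg norm hAP
    rwa [norm_mul, norm_neg, Complex.norm_real, Real.norm_eq_abs, abs_of_pos hc] at this
  have hPle : ‖P‖ ≤ C1 := by
    rw [hC1def, le_div_iff₀ (by positivity)]
    calc ‖P‖ * (r * a) ≤ ‖P‖ * ‖A‖ := by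
          exact mul_le_mul_of_nonneg_left hmA (norm_nonneg _)
      _ = c := by rw [mul_comm]; exact hnormAP
  -- lower bound for `‖P‖` in terms of `‖τ‖`
  set t : ℝ := ‖τ‖ with htdef
  have ht0 : 0 ≤ t := norm_nonneg _
  have hXeq : ((ρl * Rs : ℝ) : ℂ) * τ ^ 2
      = P - ((4 * μl / Rs : ℝ) : ℂ) * τ + ((2 * σ / Rs ^ 2 : ℝ) : ℂ) := by
    rw [hPdef]; ring
  have hXnorm : ρR * t ^ 2 ≤ ‖P‖ + m4 * t + s2 := by
    have h1 : ‖((ρl * Rs : ℝ) : ℂ) * τ ^ 2‖ = ρR * t ^ 2 := by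
      rw [norm_mul, norm_pow, Complex.norm_real, Real.norm_eq_abs,
        abs_of_pos (by positivity : (0:ℝ) < ρl * Rs), hρRdef, htdef]
    have h2 : ‖((4 * μl / Rs : ℝ) : ℂ) * τ‖ = m4 * t := by
      rw [norm_mul, Complex.norm_real, Real.norm_eq_abs,
        _root_.abs_of_nonneg (by positivity : (0:ℝ) ≤ 4 * μl / Rs), hm4def, htdef]
    have h3 : ‖((2 * σ / Rs ^ 2 : ℝ) : ℂ)‖ = s2 := by
      rw [Complex.norm_real, Real.norm_eq_abs,
        abs_of_pos (by positivity : (0:ℝ) < 2 * σ / Rs ^ 2), hs2def]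
    calc ρR * t ^ 2 = ‖((ρl * Rs : ℝ) : ℂ) * τ ^ 2‖ := h1.symm
      _ = ‖P - ((4 * μl / Rs : ℝ) : ℂ) * τ + ((2 * σ / Rs ^ 2 : ℝ) : ℂ)‖ := by rw [hXeq]
      _ ≤ ‖P - ((4 * μl / Rs : ℝ) : ℂ) * τ‖ + ‖((2 * σ / Rs ^ 2 : ℝ) : ℂ)‖ := norm_add_le _ _
      _ ≤ ‖P‖ + ‖((4 * μl / Rs : ℝ) : ℂ) * τ‖ + ‖((2 * σ / Rs ^ 2 : ℝ) : ℂ)‖ := by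
          linarith only [norm_sub_le P (((4 * μl / Rs : ℝ) : ℂ) * τ)]
      _ = ‖P‖ + m4 * t + s2 := by rw [h2, h3]
  have hineq : ρR * t ^ 2 ≤ C1 + m4 * t + s2 := by linarith only [hXnorm, hPle]
  -- conclude `t ≤ M`
  by_contra hgt
  push_neg at hgt
  have hM1 : 1 ≤ M := by
    rw [hMdef]
    have : 0 ≤ D / ρR := by positivity
    linarith only [this]
  have ht1 : 1 < t := lt_of_le_of_lt hM1 hgt
  have hρRM : ρR * M = ρR + D := by rw [hMdef]; field_simp
  have key : ρR * (t * M) ≤ ρR * t ^ 2 := by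
    nlinarith only [mul_pos (mul_pos hρR (by linarith only [ht1] : (0:ℝ) < t))
      (by linarith only [hgt] : 0 < t - M)]
  have hexp : ρR * (t * M) = ρR * t + t * C1 + t * s2 + t * m4 := by
    rw [hDdef] at hρRM
    linear_combination t * hρRM
  have h3 : C1 ≤ t * C1 := by nlinarith only [ht1, hC1]
  have h4 : s2 ≤ t * s2 := by nlinarith only [ht1, hs2]
  have h5 : 0 < ρR * t := by positivity
  linarith only [hineq, key, hexp, h3, h4, h5]

open BubbleAux in
lemma Sfun_continuousOn {k : ℝ} (hk : 0 < k) :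
    ContinuousOn (fun τ => Sfun k τ) {τ : ℂ | -(k / 2) ≤ τ.re} := by
  refine continuousOn_tsum (f := fun j τ => fterm k τ j)
    (u := fun j : ℕ+ => 2 / ((j : ℕ) : ℝ) ^ 2) (fun j => ?_) summable_two_div_sq
    (fun j τ hτ => fterm_norm_le hk hτ j)
  refine ContinuousOn.div continuousOn_const ?_ ?_
  · exact (continuous_const.add continuous_id).continuousOn
  · intro x hx
    exact dterm_ne_zero hk hx j

open BubbleAux in
lemma Q_continuousOn (κ Rg T ρl Rs σ ρs μl γ : ℝ) (hκ : 0 < κ) :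
    ContinuousOn (Q κ Rg T ρl Rs σ ρs μl γ)
      {τ : ℂ | -(Real.pi ^ 2 * κ / 2) ≤ τ.re} := by
  have hk : 0 < Real.pi ^ 2 * κ := by positivity
  have hfun : Q κ Rg T ρl Rs σ ρs μl γ = fun τ =>
      ((1 / (Rg * T) : ℝ) : ℂ) *
        (((4 * Real.pi / (3 * γ) : ℝ) : ℂ) +
          ((8 * (γ - 1) / (Real.pi * γ) : ℝ) : ℂ) * Sfun (Real.pi ^ 2 * κ) τ) *
        (((ρl * Rs : ℝ) : ℂ) * τ ^ 2 + ((4 * μl / Rs : ℝ) : ℂ) * τ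
          - ((2 * σ / Rs ^ 2 : ℝ) : ℂ)) + ((4 * Real.pi * ρs / Rs : ℝ) : ℂ) :=
    funext (Q_eq κ Rg T ρl Rs σ ρs μl γ)
  rw [hfun]
  have hS := Sfun_continuousOn hk
  have hP : Continuous fun τ : ℂ => ((ρl * Rs : ℝ) : ℂ) * τ ^ 2
      + ((4 * μl / Rs : ℝ) : ℂ) * τ - ((2 * σ / Rs ^ 2 : ℝ) : ℂ) := by continuity
  exact ((continuousOn_const.mul (continuousOn_const.add
    (continuousOn_const.mul hS))).mul hP.continuousOn).add continuousOn_const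

theorem roots_of_Q_have_negative_real_part (κ Rg T ρl Rs σ ρs pinf μl γ : ℝ)
    (hκ : 0 < κ) (hRg : 0 < Rg) (hT : 0 < T) (hρl : 0 < ρl) (hRs : 0 < Rs)
    (hσ : 0 < σ) (hρs : 0 < ρs) (hp : 0 < pinf) (hμl : 0 ≤ μl) (hγ : 1 < γ)
    (heq : Rg * T * ρs = pinf + 2 * σ / Rs) :
    ∃ β : ℝ, 0 < β ∧ ∀ τ : ℂ,
      (∀ j : ℕ+, τ ≠ -(((Real.pi ^ 2 * κ * ((j : ℕ) : ℝ) ^ 2 : ℝ) : ℂ))) →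
      Q κ Rg T ρl Rs σ ρs μl γ τ = 0 → τ.re ≤ -β := by
  set k : ℝ := Real.pi ^ 2 * κ with hkdef
  have hk : 0 < k := by rw [hkdef]; positivity
  obtain ⟨M, hM, hMbound⟩ := zero_bound κ Rg T ρl Rs σ ρs μl γ hκ hRg hT hρl hRs hσ hρs hμl hγ
  have hnz : ∀ τ : ℂ, 0 ≤ τ.re → Q κ Rg T ρl Rs σ ρs μl γ τ ≠ 0 :=
    no_zero_in_rhp κ Rg T ρl Rs σ ρs pinf μl γ hκ hRg hT hρl hRs hσ hρs hp hμl hγ heq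
  -- the compact region containing all zeros with real part `> -k/2`
  set K0 : Set ℂ := Complex.re ⁻¹' Set.Icc (-(k / 2)) 0 ∩ Metric.closedBall 0 M with hK0def
  have hK0closed : IsClosed K0 :=
    (isClosed_Icc.preimage Complex.continuous_re).inter Metric.isClosed_closedBall
  have hK0compact : IsCompact K0 :=
    (isCompact_closedBall 0 M).inter_left (isClosed_Icc.preimage Complex.continuous_re)
  set K : Set ℂ := K0 ∩ (Q κ Rg T ρl Rs σ ρs μl γ) ⁻¹' {0} with hKdef
  have hK0sub : K0 ⊆ {τ : ℂ | -(k / 2) ≤ τ.re} := fun τ hτ => hτ.1.1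
  have hKclosed : IsClosed K :=
    ContinuousOn.preimage_isClosed_of_isClosed
      ((Q_continuousOn κ Rg T ρl Rs σ ρs μl γ hκ).mono hK0sub) hK0closed isClosed_singleton
  have hKcompact : IsCompact K :=
    hK0compact.of_isClosed_subset hKclosed Set.inter_subset_left
  -- every zero with real part `> -(k/2)` lies in `K` and has negative real part
  have hmem : ∀ τ : ℂ, -(k / 2) < τ.re → Q κ Rg T ρl Rs σ ρs μl γ τ = 0 →
      τ ∈ K ∧ τ.re < 0 := by
    intro τ hτre hQτ
    have hτneg : τ.re < 0 := by
      by_contra h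
      push_neg at h
      exact hnz τ h hQτ
    have hball : τ ∈ Metric.closedBall 0 M := by
      rw [Metric.mem_closedBall, dist_zero_right]
      exact hMbound τ hτre.le hQτ
    exact ⟨⟨⟨⟨hτre.le, hτneg.le⟩, hball⟩, hQτ⟩, hτneg⟩
  by_cases hne : K.Nonempty
  · obtain ⟨τ0, hτ0K, hmax⟩ := hKcompact.exists_isMaxOn hne
      Complex.continuous_re.continuousOn
    have hτ0neg : τ0.re < 0 := by
      rcases lt_or_eq_of_le hτ0K.1.1.2 with h | h
      · exact h
      · exact absurd hτ0K.2 (hnz τ0 h.ge)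
    refine ⟨min (k / 2) (-τ0.re), lt_min (by positivity) (by linarith), ?_⟩
    intro τ _ hQτ
    rcases le_or_gt τ.re (-(k / 2)) with h | h
    · calc τ.re ≤ -(k / 2) := h
        _ ≤ -min (k / 2) (-τ0.re) := by
            rw [neg_le_neg_iff]
            exact min_le_left _ _
    · obtain ⟨hτK, _⟩ := hmem τ h hQτ
      calc τ.re ≤ τ0.re := hmax hτK
        _ = -(-τ0.re) := by ring
        _ ≤ -min (k / 2) (-τ0.re) := by
            rw [neg_le_neg_iff]
            exact min_le_right _ _
  · refine ⟨k / 2, by positivity, ?_⟩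
    intro τ _ hQτ
    rcases le_or_gt τ.re (-(k / 2)) with h | h
    · exact h
    · exact absurd ⟨τ, (hmem τ h hQτ).1⟩ hne
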